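/- arXiv:2505.19936 — 3 statements merged into one kernel-verified Lean document; each statement's English description precedes it below -/
import Mathlib

section
/- Under assumptions A1–A3, let F be Fréchet differentiable, x† an x*-minimum norm solution, and {X_m} a sequence of compact subsets with X_m ⊆ C ∩ D(F) whose union is dense in C ∩ D(F). Let parameter choice rules satisfy: α(δ) → 0, δ²/α(δ) → 0, m(δ) → ∞, and there exist x_{m(δ)} ∈ X_{m(δ)} with ‖x† − x_{m(δ)}‖²/α(δ) → 0 as δ → 0. Then for any sequence δ_k → 0, data y^{δ_k} with ‖y^{δ_k} − y‖ ≤ δ_k, and regularized solutions x_k ∈ argmin_{z ∈ X_{m(δ_k)}} ‖F(z) − y^{δ_k}‖² + α(δ_k)‖z − x*‖², the sequence {x_k} has a strongly convergent subsequence, and every limit of a convergent subsequence is an x*-minimum norm solution. -/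
open Filter Topology

/-- Weak convergence of a sequence in a real inner product space. -/
def WeaklyConv {H : Type*} [NormedAddCommGroup H] [InnerProductSpace ℝ H]
    (x : ℕ → H) (l : H) : Prop :=
  ∀ z : H, Tendsto (fun n => (inner ℝ (x n) z : ℝ)) atTop (nhds (inner ℝ l z))

/-- A set is weakly sequentially closed. -/
def WeaklySeqClosed {H : Type*} [NormedAddCommGroup H] [InnerProductSpace ℝ H]
    (C : Set H) : Prop :=
  ∀ (x : ℕ → H) (l : H), (∀ n, x n ∈ C) → WeaklyConv x l → l ∈ C

/-- An operator `F` with domain `D` is weakly closed: if `x n ⇀ l` and `F (x n) ⇀ w`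
then `l ∈ D` and `F l = w`. -/
def WeaklyClosedMap {X Y : Type*} [NormedAddCommGroup X] [InnerProductSpace ℝ X]
    [NormedAddCommGroup Y] [InnerProductSpace ℝ Y] (F : X → Y) (D : Set X) : Prop :=
  ∀ (x : ℕ → X) (l : X) (w : Y), (∀ n, x n ∈ D) → WeaklyConv x l →
    WeaklyConv (fun n => F (x n)) w → l ∈ D ∧ F l = w

/-- `u` is an `x*`-minimum norm solution of `F z = y` subject to `z ∈ C ∩ D`. -/
def MinNormSol {X Y : Type*} [NormedAddCommGroup X] [InnerProductSpace ℝ X]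
    [NormedAddCommGroup Y] [InnerProductSpace ℝ Y]
    (F : X → Y) (D C : Set X) (y : Y) (xs : X) (u : X) : Prop :=
  u ∈ C ∩ D ∧ F u = y ∧ ∀ z ∈ C ∩ D, F z = y → ‖u - xs‖ ≤ ‖z - xs‖

/-! Testing the minimality of `x_k` against the admissible point `w_k = x_{m(δ_k)}` bounds
`‖x_k - x*‖²` by `T_k = (‖F w_k - y‖ + δ_k)² / α_k + ‖w_k - x*‖²` and the residual
`‖F x_k - y^{δ_k}‖²` by `α_k T_k`. Differentiability of `F` at `x†` gives
`‖F w_k - y‖ = O(‖w_k - x†‖)`, so the parameter choice rules yield `T_k → ‖x† - x*‖²` and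
`F x_k → y`. The sequence `x_k` is therefore bounded and has a weakly convergent subsequence;
weak closedness makes its limit `u` a solution in `C ∩ D`, hence `‖x† - x*‖ ≤ ‖u - x*‖`, and in a
Hilbert space weak convergence together with `limsup ‖x_k - x*‖ ≤ ‖u - x*‖` is strong convergence.
For any strongly convergent subsequence the same bound shows that its limit is an
`x*`-minimum norm solution. -/

section Analysis

variable {ι : Type*} {l : Filter ι}

theorem Asymptotics.IsBigO.tendsto_norm_sq_div {E F : Type*} [SeminormedAddCommGroup E]
    [SeminormedAddCommGroup F] {f : ι → E} {g : ι → F} {a : ι → ℝ} (h : f =O[l] g)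
    (hg : Tendsto (fun i => ‖g i‖ ^ 2 / a i) l (𝓝 0)) :
    Tendsto (fun i => ‖f i‖ ^ 2 / a i) l (𝓝 0) := by
  simp only [div_eq_mul_inv] at hg ⊢
  exact ((h.norm_norm.pow 2).mul (Asymptotics.isBigO_refl (fun i => (a i)⁻¹) l)).trans_tendsto hg

theorem tendsto_add_sq_div_of_tendsto_sq_div {f g a : ι → ℝ} (ha : ∀ i, 0 ≤ a i)
    (hf : Tendsto (fun i => f i ^ 2 / a i) l (𝓝 0))
    (hg : Tendsto (fun i => g i ^ 2 / a i) l (𝓝 0)) :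
    Tendsto (fun i => (f i + g i) ^ 2 / a i) l (𝓝 0) := by
  refine squeeze_zero (fun i => div_nonneg (sq_nonneg _) (ha i)) (fun i => ?_)
    (by simpa using (hf.add hg).const_mul 2)
  calc (f i + g i) ^ 2 / a i ≤ 2 * (f i ^ 2 + g i ^ 2) / a i := by
        gcongr
        · exact ha i
        · nlinarith [sq_nonneg (f i - g i)]
    _ = 2 * (f i ^ 2 / a i + g i ^ 2 / a i) := by ring

theorem tendsto_of_norm_sub_sq_div_tendsto_zero {E : Type*} [SeminormedAddCommGroup E]
    {w : ι → E} {x : E} {a : ι → ℝ} (ha : ∀ i, a i ≠ 0) (ha0 : Tendsto a l (𝓝 0))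
    (h : Tendsto (fun i => ‖x - w i‖ ^ 2 / a i) l (𝓝 0)) : Tendsto w l (𝓝 x) := by
  have hsq : Tendsto (fun i => ‖w i - x‖ ^ 2) l (𝓝 0) := by
    simpa [norm_sub_rev, div_mul_cancel₀ _ (ha _)] using h.mul ha0
  rw [tendsto_iff_norm_sub_tendsto_zero]
  simpa using hsq.sqrt

theorem isBounded_range_of_norm_sub_sq_le {E : Type*} [SeminormedAddCommGroup E] {x : ℕ → E}
    {c : E} {T : ℕ → ℝ} {t : ℝ} (hT : Tendsto T atTop (𝓝 t)) (hxT : ∀ n, ‖x n - c‖ ^ 2 ≤ T n) :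
    Bornology.IsBounded (Set.range x) := by
  obtain ⟨M, hM⟩ := hT.bddAbove_range
  refine (Metric.isBounded_iff_subset_closedBall c).2 ⟨√M, ?_⟩
  rintro _ ⟨n, rfl⟩
  rw [Metric.mem_closedBall, dist_eq_norm]
  exact Real.le_sqrt_of_sq_le ((hxT n).trans (hM ⟨n, rfl⟩))

end Analysis

section Tikhonov

variable {X Y : Type*} [SeminormedAddCommGroup X] [SeminormedAddCommGroup Y]

def tikhonovFunctional (F : X → Y) (yd : Y) (xs : X) (a : ℝ) (z : X) : ℝ :=
  ‖F z - yd‖ ^ 2 + a * ‖z - xs‖ ^ 2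

variable {F : X → Y} {y yd : Y} {xs x w : X} {a δ : ℝ}

theorem tikhonovFunctional_le_of_norm_sub_le (hyd : ‖yd - y‖ ≤ δ) :
    tikhonovFunctional F yd xs a w ≤ (‖F w - y‖ + δ) ^ 2 + a * ‖w - xs‖ ^ 2 := by
  have : ‖F w - yd‖ ≤ ‖F w - y‖ + δ := by
    have := norm_sub_le_norm_sub_add_norm_sub (F w) y yd
    rw [norm_sub_rev y yd] at this
    linarith
  exact add_le_add_left (pow_le_pow_left₀ (norm_nonneg _) this 2) _

theorem norm_apply_sub_sq_le_of_tikhonovFunctional_le (ha : 0 ≤ a) (hyd : ‖yd - y‖ ≤ δ)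
    (hmin : tikhonovFunctional F yd xs a x ≤ tikhonovFunctional F yd xs a w) :
    ‖F x - yd‖ ^ 2 ≤ (‖F w - y‖ + δ) ^ 2 + a * ‖w - xs‖ ^ 2 := by
  have := hmin.trans (tikhonovFunctional_le_of_norm_sub_le hyd)
  unfold tikhonovFunctional at this
  nlinarith [mul_nonneg ha (sq_nonneg ‖x - xs‖)]

theorem norm_sub_sq_le_of_tikhonovFunctional_le (ha : 0 < a) (hyd : ‖yd - y‖ ≤ δ)
    (hmin : tikhonovFunctional F yd xs a x ≤ tikhonovFunctional F yd xs a w) :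
    ‖x - xs‖ ^ 2 ≤ (‖F w - y‖ + δ) ^ 2 / a + ‖w - xs‖ ^ 2 := by
  have := hmin.trans (tikhonovFunctional_le_of_norm_sub_le hyd)
  unfold tikhonovFunctional at this
  rw [div_add' _ _ _ ha.ne', le_div_iff₀ ha]
  nlinarith [sq_nonneg ‖F x - yd‖]

theorem tendsto_apply_of_tikhonovFunctional_le {ι : Type*} {l : Filter ι} {a δ : ι → ℝ}
    {x w : ι → X} {yd : ι → Y} {w₀ : X} (ha : ∀ i, 0 ≤ a i) (ha0 : Tendsto a l (𝓝 0))
    (hδ0 : Tendsto δ l (𝓝 0)) (hw : Tendsto w l (𝓝 w₀))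
    (hFw : Tendsto (fun i => F (w i)) l (𝓝 y)) (hyd : ∀ i, ‖yd i - y‖ ≤ δ i)
    (hmin : ∀ i, tikhonovFunctional F (yd i) xs (a i) (x i) ≤
      tikhonovFunctional F (yd i) xs (a i) (w i)) :
    Tendsto (fun i => F (x i)) l (𝓝 y) := by
  have hbound : Tendsto (fun i => (‖F (w i) - y‖ + δ i) ^ 2 + a i * ‖w i - xs‖ ^ 2) l (𝓝 0) := by
    simpa using (((tendsto_iff_norm_sub_tendsto_zero.1 hFw).add hδ0).pow 2).add
      (ha0.mul ((hw.sub_const xs).norm.pow 2))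
  have hres : Tendsto (fun i => ‖F (x i) - yd i‖) l (𝓝 0) := by
    simpa using (squeeze_zero (fun i => sq_nonneg _)
      (fun i => norm_apply_sub_sq_le_of_tikhonovFunctional_le (ha i) (hyd i) (hmin i)) hbound).sqrt
  rw [tendsto_iff_norm_sub_tendsto_zero]
  refine squeeze_zero (fun i => norm_nonneg _) (fun i => ?_) (by simpa using hres.add hδ0)
  exact (norm_sub_le_norm_sub_add_norm_sub _ (yd i) y).trans (add_le_add_right (hyd i) _)

end Tikhonov

section WeakConvergence

variable {H : Type*} [NormedAddCommGroup H] [InnerProductSpace ℝ H]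

theorem WeaklyConv.of_tendsto {x : ℕ → H} {u : H} (h : Tendsto x atTop (𝓝 u)) :
    WeaklyConv x u :=
  fun _ => h.inner tendsto_const_nhds

theorem WeaklyConv.sub_const {x : ℕ → H} {u : H} (h : WeaklyConv x u) (c : H) :
    WeaklyConv (fun n => x n - c) (u - c) :=
  fun z => by simpa only [inner_sub_left] using (h z).sub_const (inner ℝ c z)

theorem exists_strictMono_weaklyConv_of_isBounded [CompleteSpace H] {x : ℕ → H}
    (hx : Bornology.IsBounded (Set.range x)) :
    ∃ (φ : ℕ → ℕ) (u : H), StrictMono φ ∧ WeaklyConv (x ∘ φ) u := by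
  obtain ⟨M, hM⟩ := isBounded_iff_forall_norm_le.1 hx
  set K := (Submodule.span ℝ (Set.range x)).topologicalClosure
  have hxK : ∀ n, x n ∈ K := fun n =>
    Submodule.le_topologicalClosure _ (Submodule.subset_span (Set.mem_range_self n))
  have : CompleteSpace K := (Submodule.isClosed_topologicalClosure _).completeSpace_coe
  have : TopologicalSpace.SeparableSpace K := by
    refine TopologicalSpace.IsSeparable.separableSpace ?_
    rw [Submodule.topologicalClosure_coe]
    exact (Set.countable_range x).isSeparable.span.closure
  -- sequential Banach–Alaoglu for `⟪x n, ·⟫` on the separable space `K`, then Riesz on `H`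
  -- after projecting onto `K`
  let f : ℕ → StrongDual ℝ K := fun n => (innerSL ℝ (x n)).comp K.subtypeL
  have hf : ∀ n, ‖f n‖ ≤ M := fun n =>
    (f n).opNorm_le_bound ((norm_nonneg _).trans (hM _ ⟨n, rfl⟩)) fun v =>
      (norm_inner_le_norm (x n) (v : H)).trans <| by
        simpa using mul_le_mul_of_nonneg_right (hM _ ⟨n, rfl⟩) (norm_nonneg v)
  obtain ⟨a, -, φ, hφ, ha⟩ := WeakDual.isSeqCompact_closedBall ℝ K 0 M
    (x := fun n => StrongDual.toWeakDual (f n)) (fun n => by simpa using hf n)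
  refine ⟨φ, (InnerProductSpace.toDual ℝ H).symm
    ((WeakDual.toStrongDual a).comp K.orthogonalProjectionOnto), hφ, fun z => ?_⟩
  rw [InnerProductSpace.toDual_symm_apply]
  refine (((WeakDual.eval_continuous (K.orthogonalProjectionOnto z)).tendsto a).comp ha).congr
    fun n => ?_
  exact K.inner_orthogonalProjectionOnto_eq_of_mem_left ⟨_, hxK (φ n)⟩ z

theorem WeaklyConv.tendsto_of_norm_sq_le {x : ℕ → H} {u : H} {T : ℕ → ℝ} {t : ℝ}
    (hx : WeaklyConv x u) (hT : Tendsto T atTop (𝓝 t)) (hxT : ∀ n, ‖x n‖ ^ 2 ≤ T n)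
    (ht : t ≤ ‖u‖ ^ 2) : Tendsto x atTop (𝓝 u) := by
  have hbound : ∀ n, ‖x n - u‖ ^ 2 ≤ T n - 2 * inner ℝ (x n) u + ‖u‖ ^ 2 := fun n => by
    rw [norm_sub_sq_real]
    linarith [hxT n]
  have hlim : Tendsto (fun n => T n - 2 * inner ℝ (x n) u + ‖u‖ ^ 2) atTop
      (𝓝 (t - 2 * ‖u‖ ^ 2 + ‖u‖ ^ 2)) := by
    simpa [real_inner_self_eq_norm_sq] using ((hT.sub ((hx u).const_mul 2)).add_const (‖u‖ ^ 2))
  have hsq : Tendsto (fun n => ‖x n - u‖ ^ 2) atTop (𝓝 0) := by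
    refine squeeze_zero (fun n => sq_nonneg _) (fun n => (hbound n).trans (le_max_left _ 0)) ?_
    simpa [max_eq_right (by linarith : t - 2 * ‖u‖ ^ 2 + ‖u‖ ^ 2 ≤ 0)] using
      hlim.max (tendsto_const_nhds (x := (0 : ℝ)))
  rw [tendsto_iff_norm_sub_tendsto_zero]
  simpa using hsq.sqrt

variable {Y : Type*} [NormedAddCommGroup Y] [InnerProductSpace ℝ Y]

theorem WeaklyClosedMap.mem_inter_and_apply_eq {F : H → Y} {D C : Set H} {y : Y}
    (hF : WeaklyClosedMap F D) (hC : WeaklySeqClosed C) {x : ℕ → H} {u : H}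
    (hxCD : ∀ n, x n ∈ C ∩ D) (hxu : WeaklyConv x u)
    (hFx : Tendsto (fun n => F (x n)) atTop (𝓝 y)) :
    u ∈ C ∩ D ∧ F u = y := by
  obtain ⟨huD, hFu⟩ := hF x u y (fun n => (hxCD n).2) hxu (WeaklyConv.of_tendsto hFx)
  exact ⟨⟨hC x u (fun n => (hxCD n).1) hxu, huD⟩, hFu⟩

theorem MinNormSol.convergent_subseq_of_norm_sub_sq_le [CompleteSpace H] {F : H → Y}
    {D C : Set H} {y : Y} {xs xdag : H} (hdag : MinNormSol F D C y xs xdag)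
    (hF : WeaklyClosedMap F D) (hC : WeaklySeqClosed C) {x : ℕ → H} {T : ℕ → ℝ}
    (hxCD : ∀ k, x k ∈ C ∩ D) (hFx : Tendsto (fun k => F (x k)) atTop (𝓝 y))
    (hT : Tendsto T atTop (𝓝 (‖xdag - xs‖ ^ 2))) (hxT : ∀ k, ‖x k - xs‖ ^ 2 ≤ T k) :
    (∃ (φ : ℕ → ℕ) (u : H), StrictMono φ ∧ Tendsto (fun n => x (φ n)) atTop (𝓝 u)) ∧
      ∀ (φ : ℕ → ℕ) (u : H), StrictMono φ →
        Tendsto (fun n => x (φ n)) atTop (𝓝 u) → MinNormSol F D C y xs u := by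
  have hsol : ∀ φ u, StrictMono φ → WeaklyConv (x ∘ φ) u → u ∈ C ∩ D ∧ F u = y :=
    fun φ u hφ hu => hF.mem_inter_and_apply_eq hC (fun n => hxCD _) hu (hFx.comp hφ.tendsto_atTop)
  refine ⟨?_, fun φ u hφ hu => ?_⟩
  · obtain ⟨φ, u, hφ, hu⟩ :=
      exists_strictMono_weaklyConv_of_isBounded (isBounded_range_of_norm_sub_sq_le hT hxT)
    obtain ⟨huCD, hFu⟩ := hsol φ u hφ hu
    have := (hu.sub_const xs).tendsto_of_norm_sq_le (hT.comp hφ.tendsto_atTop) (fun n => hxT _)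
      (pow_le_pow_left₀ (norm_nonneg _) (hdag.2.2 u huCD hFu) 2)
    exact ⟨φ, u, hφ, by simpa using this.add_const xs⟩
  · obtain ⟨huCD, hFu⟩ := hsol φ u hφ (WeaklyConv.of_tendsto hu)
    have hle : ‖u - xs‖ ^ 2 ≤ ‖xdag - xs‖ ^ 2 :=
      le_of_tendsto_of_tendsto' ((hu.sub_const xs).norm.pow 2) (hT.comp hφ.tendsto_atTop)
        fun n => hxT _
    exact ⟨huCD, hFu, fun z hz hFz =>
      ((pow_le_pow_iff_left₀ (norm_nonneg _) (norm_nonneg _) two_ne_zero).1 hle).trans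
        (hdag.2.2 z hz hFz)⟩

end WeakConvergence

theorem tikhonov_compact_sets_convergence_general
    {X Y : Type*} [NormedAddCommGroup X] [InnerProductSpace ℝ X] [CompleteSpace X]
    [NormedAddCommGroup Y] [InnerProductSpace ℝ Y]
    (F : X → Y) (D C : Set X) (y : Y) (xs : X)
    (hF : WeaklyClosedMap F D) (hC : WeaklySeqClosed C)
    (Fd : X → X →L[ℝ] Y) (hFd : ∀ z ∈ D, HasFDerivWithinAt F (Fd z) D z)
    (xdag : X) (hdag : MinNormSol F D C y xs xdag)
    (Xm : ℕ → Set X) (hXsub : ∀ m, Xm m ⊆ C ∩ D)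
    (α : ℝ → ℝ) (hαpos : ∀ δ > (0:ℝ), 0 < α δ)
    (hα1 : Tendsto α (nhdsWithin 0 (Set.Ioi 0)) (nhds 0))
    (hα2 : Tendsto (fun δ => δ ^ 2 / α δ) (nhdsWithin 0 (Set.Ioi 0)) (nhds 0))
    (mft : ℝ → ℕ)
    (xapx : ℝ → X) (hapx : ∀ δ > (0:ℝ), xapx δ ∈ Xm (mft δ))
    (hapx0 : Tendsto (fun δ => ‖xdag - xapx δ‖ ^ 2 / α δ) (nhdsWithin 0 (Set.Ioi 0)) (nhds 0)) :
    ∀ (δk : ℕ → ℝ), (∀ k, 0 < δk k) → Tendsto δk atTop (nhds 0) →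
    ∀ (yd : ℕ → Y), (∀ k, ‖yd k - y‖ ≤ δk k) →
    ∀ (xk : ℕ → X),
      (∀ k, xk k ∈ Xm (mft (δk k)) ∧ ∀ z ∈ Xm (mft (δk k)),
        ‖F (xk k) - yd k‖ ^ 2 + α (δk k) * ‖xk k - xs‖ ^ 2 ≤
          ‖F z - yd k‖ ^ 2 + α (δk k) * ‖z - xs‖ ^ 2) →
      (∃ (φ : ℕ → ℕ) (u : X), StrictMono φ ∧
          Tendsto (fun n => xk (φ n)) atTop (nhds u)) ∧
        ∀ (φ : ℕ → ℕ) (u : X), StrictMono φ →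
          Tendsto (fun n => xk (φ n)) atTop (nhds u) → MinNormSol F D C y xs u := by
  intro δk hδk hδk0 yd hyd xk hxk
  have hδk' : Tendsto δk atTop (𝓝[>] 0) := tendsto_nhdsWithin_iff.2 ⟨hδk0, .of_forall hδk⟩
  set a := fun k => α (δk k)
  set w := fun k => xapx (δk k)
  have ha : ∀ k, 0 < a k := fun k => hαpos _ (hδk k)
  have hwCD : ∀ k, w k ∈ C ∩ D := fun k => hXsub _ (hapx _ (hδk k))
  have hmin : ∀ k, tikhonovFunctional F (yd k) xs (a k) (xk k) ≤
      tikhonovFunctional F (yd k) xs (a k) (w k) := fun k => (hxk k).2 _ (hapx _ (hδk k))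
  have hw : Tendsto w atTop (𝓝 xdag) :=
    tendsto_of_norm_sub_sq_div_tendsto_zero (fun k => (ha k).ne') (hα1.comp hδk')
      (hapx0.comp hδk')
  have hwD : Tendsto w atTop (𝓝[D] xdag) :=
    tendsto_nhdsWithin_iff.2 ⟨hw, .of_forall fun k => (hwCD k).2⟩
  have hres : Tendsto (fun k => ‖F (w k) - y‖ ^ 2 / a k) atTop (𝓝 0) := by
    rw [← hdag.2.1]
    refine ((hFd xdag hdag.1.2).isBigO_sub.comp_tendsto hwD).tendsto_norm_sq_div ?_
    simpa only [Function.comp_def, norm_sub_rev xdag] using hapx0.comp hδk'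
  set T := fun k => (‖F (w k) - y‖ + δk k) ^ 2 / a k + ‖w k - xs‖ ^ 2
  have hxT : ∀ k, ‖xk k - xs‖ ^ 2 ≤ T k := fun k =>
    norm_sub_sq_le_of_tikhonovFunctional_le (ha k) (hyd k) (hmin k)
  have hT : Tendsto T atTop (𝓝 (‖xdag - xs‖ ^ 2)) := by
    simpa using (tendsto_add_sq_div_of_tendsto_sq_div (fun k => (ha k).le) hres
      (hα2.comp hδk')).add ((hw.sub_const xs).norm.pow 2)
  have hFxk : Tendsto (fun k => F (xk k)) atTop (𝓝 y) :=
    tendsto_apply_of_tikhonovFunctional_le (fun k => (ha k).le) (hα1.comp hδk') hδk0 hw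
      (hdag.2.1 ▸ (hFd xdag hdag.1.2).continuousWithinAt.tendsto.comp hwD) hyd hmin
  exact hdag.convergent_subseq_of_norm_sub_sq_le hF hC (fun k => hXsub _ (hxk k).1) hFxk hT hxT

/-- Convergence of Tikhonov regularization on a dense sequence of compact sets:
under the parameter choice rules, regularized solutions have a strongly convergent
subsequence and every limit of a convergent subsequence is an `x*`-minimum norm solution. -/
theorem tikhonov_compact_sets_convergence
    {X Y : Type*} [NormedAddCommGroup X] [InnerProductSpace ℝ X] [CompleteSpace X]
    [NormedAddCommGroup Y] [InnerProductSpace ℝ Y] [CompleteSpace Y]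
    (F : X → Y) (D C : Set X) (y : Y) (xs : X)
    (hFc : ContinuousOn F D) (hF : WeaklyClosedMap F D) (hC : WeaklySeqClosed C)
    (Fd : X → X →L[ℝ] Y) (hFd : ∀ z ∈ D, HasFDerivWithinAt F (Fd z) D z)
    (xdag : X) (hdag : MinNormSol F D C y xs xdag)
    (Xm : ℕ → Set X) (hXc : ∀ m, IsCompact (Xm m)) (hXsub : ∀ m, Xm m ⊆ C ∩ D)
    (hXdense : C ∩ D ⊆ closure (⋃ m, Xm m))
    (α : ℝ → ℝ) (hαpos : ∀ δ > (0:ℝ), 0 < α δ)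
    (hα1 : Tendsto α (nhdsWithin 0 (Set.Ioi 0)) (nhds 0))
    (hα2 : Tendsto (fun δ => δ ^ 2 / α δ) (nhdsWithin 0 (Set.Ioi 0)) (nhds 0))
    (mft : ℝ → ℕ) (hm : Tendsto mft (nhdsWithin 0 (Set.Ioi 0)) atTop)
    (xapx : ℝ → X) (hapx : ∀ δ > (0:ℝ), xapx δ ∈ Xm (mft δ))
    (hapx0 : Tendsto (fun δ => ‖xdag - xapx δ‖ ^ 2 / α δ) (nhdsWithin 0 (Set.Ioi 0)) (nhds 0)) :
    ∀ (δk : ℕ → ℝ), (∀ k, 0 < δk k) → Tendsto δk atTop (nhds 0) →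
    ∀ (yd : ℕ → Y), (∀ k, ‖yd k - y‖ ≤ δk k) →
    ∀ (xk : ℕ → X),
      (∀ k, xk k ∈ Xm (mft (δk k)) ∧ ∀ z ∈ Xm (mft (δk k)),
        ‖F (xk k) - yd k‖ ^ 2 + α (δk k) * ‖xk k - xs‖ ^ 2 ≤
          ‖F z - yd k‖ ^ 2 + α (δk k) * ‖z - xs‖ ^ 2) →
      (∃ (φ : ℕ → ℕ) (u : X), StrictMono φ ∧
          Tendsto (fun n => xk (φ n)) atTop (nhds u)) ∧
        ∀ (φ : ℕ → ℕ) (u : X), StrictMono φ →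
          Tendsto (fun n => xk (φ n)) atTop (nhds u) → MinNormSol F D C y xs u :=
  tikhonov_compact_sets_convergence_general F D C y xs hF hC Fd hFd xdag hdag Xm hXsub α hαpos hα1
    hα2 mft xapx hapx hapx0
end

section
/- Let X, Y be Hilbert spaces, A : X → Y bounded linear with weakly closed domain, C weakly closed containing a solution of Ax = y, and suppose x† ∈ R(A*), say x† = A*w. Let ‖y^δ − y‖ ≤ δ, α ∝ δ, and x_{m(δ)} ∈ X_{m(δ)} with ‖x_{m(δ)} − x†‖²/δ → 0. Then the minimum-norm solution x† in R(A*) is unique and the regularized solutions x^δ_{m,α} ∈ argmin_{z∈X_m} ‖Az − y^δ‖² + α‖z‖² satisfy ‖A x^δ_{m(δ),α(δ)} − y^δ‖ ≤ max{O(δ), O(f(m(δ))^{1/2})} and ‖x^δ_{m(δ),α(δ)} − x†‖ ≤ max{O(δ^{1/2}), O(δ^{−1/2} f(m(δ))^{1/2})}, where ‖x_m − x†‖² = O(f(m)). -/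
open Filter Topology

/-!
Two elements `A* v₁`, `A* v₂` of the range of `A*` with the same image under `A` coincide, because
`‖A* (v₁ - v₂)‖² = ⟪v₁ - v₂, A A* (v₁ - v₂)⟫ = 0`.

For the rates, compare the Tikhonov minimizer `x` with the approximant `z ∈ X_m` of `x†`. Writing
`r, s` for their residuals and `d, e` for their distances to `x† = A* w`, minimality gives
`r² + α d² ≤ s² + α e² + 2 α ‖w‖ (s + r)`. With `s ≤ ‖A‖ e + δ`, `e = O(√f)`, `α = c δ` and
`M = max δ √f`, this yields `r = O(M)` and `δ d² = O(M²)`, i.e. `d = O(M / √δ)`.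
-/

section Hilbert

variable {𝕜 X Y : Type*} [RCLike 𝕜] [NormedAddCommGroup X] [InnerProductSpace 𝕜 X]
  [CompleteSpace X] [NormedAddCommGroup Y] [InnerProductSpace 𝕜 Y] [CompleteSpace Y]

theorem eq_of_apply_eq_of_mem_range_adjoint {A : X →L[𝕜] Y} {x₁ x₂ : X} (h : A x₁ = A x₂)
    (h₁ : x₁ ∈ Set.range (ContinuousLinearMap.adjoint A))
    (h₂ : x₂ ∈ Set.range (ContinuousLinearMap.adjoint A)) : x₁ = x₂ := by
  obtain ⟨v₁, rfl⟩ := h₁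
  obtain ⟨v₂, rfl⟩ := h₂
  have hker : A (ContinuousLinearMap.adjoint A (v₁ - v₂)) = 0 := by
    rw [map_sub, map_sub, h, sub_self]
  have hzero : inner 𝕜 (ContinuousLinearMap.adjoint A (v₁ - v₂))
      (ContinuousLinearMap.adjoint A (v₁ - v₂)) = 0 := by
    rw [ContinuousLinearMap.adjoint_inner_left, hker, inner_zero_right]
  rw [← sub_eq_zero, ← map_sub]
  exact inner_self_eq_zero.mp hzero

end Hilbert

section RealHilbert

variable {X Y : Type*} [NormedAddCommGroup X] [InnerProductSpace ℝ X] [CompleteSpace X]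
  [NormedAddCommGroup Y] [InnerProductSpace ℝ Y] [CompleteSpace Y]

/-- Since `‖x‖² - ‖z‖² = ‖x - x†‖² - ‖z - x†‖² - 2⟪z - x, x†⟫` and `⟪z - x, A* w⟫ = ⟪A z - A x, w⟫`,
the source condition turns the cross term into one controlled by the residuals. -/
theorem tikhonov_source_ineq {A : X →L[ℝ] Y} {x z xdag : X} {w ydat : Y} {α : ℝ} (hα : 0 ≤ α)
    (hw : ContinuousLinearMap.adjoint A w = xdag)
    (hmin : ‖A x - ydat‖ ^ 2 + α * ‖x‖ ^ 2 ≤ ‖A z - ydat‖ ^ 2 + α * ‖z‖ ^ 2) :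
    ‖A x - ydat‖ ^ 2 + α * ‖x - xdag‖ ^ 2 ≤
      ‖A z - ydat‖ ^ 2 + α * ‖z - xdag‖ ^ 2 + 2 * α * ‖w‖ * (‖A z - ydat‖ + ‖A x - ydat‖) := by
  have hinner : inner ℝ z xdag - inner ℝ x xdag ≤ (‖A z - ydat‖ + ‖A x - ydat‖) * ‖w‖ :=
    calc inner ℝ z xdag - inner ℝ x xdag = inner ℝ ((A z - ydat) - (A x - ydat)) w := by
          rw [← inner_sub_left, ← hw, ContinuousLinearMap.adjoint_inner_right, sub_sub_sub_cancel_right,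
            map_sub]
      _ ≤ ‖(A z - ydat) - (A x - ydat)‖ * ‖w‖ := real_inner_le_norm _ _
      _ ≤ (‖A z - ydat‖ + ‖A x - ydat‖) * ‖w‖ := by gcongr; exact norm_sub_le _ _
  rw [norm_sub_sq_real x, norm_sub_sq_real z]
  nlinarith [mul_le_mul_of_nonneg_left hinner hα]

end RealHilbert

theorem norm_apply_sub_le_opNorm_mul_add {𝕜 E F : Type*} [NontriviallyNormedField 𝕜]
    [SeminormedAddCommGroup E] [SeminormedAddCommGroup F] [NormedSpace 𝕜 E] [NormedSpace 𝕜 F]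
    (A : E →L[𝕜] F) (z x : E) (v : F) : ‖A z - v‖ ≤ ‖A‖ * ‖z - x‖ + ‖A x - v‖ :=
  calc ‖A z - v‖ = ‖A (z - x) + (A x - v)‖ := by rw [map_sub, sub_add_sub_cancel]
    _ ≤ ‖A‖ * ‖z - x‖ + ‖A x - v‖ := (norm_add_le _ _).trans (by gcongr; exact A.le_opNorm _)

theorem le_add_of_sq_le_sq_add {α n r s e : ℝ} (hα : 0 ≤ α) (hn : 0 ≤ n) (hs : 0 ≤ s)
    (he : 0 ≤ e) (h : r ^ 2 ≤ s ^ 2 + α * e ^ 2 + 2 * α * n * (s + r)) :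
    r ≤ s + 2 * α * n + √α * e := by
  have hsq : (√α * e) ^ 2 = α * e ^ 2 := by rw [mul_pow, Real.sq_sqrt hα]
  -- `(r - αn)² ≤ (s + αn)² + (√α e)² ≤ (s + αn + √α e)²`
  nlinarith [mul_nonneg (Real.sqrt_nonneg α) he, mul_nonneg hα hn]

theorem residual_le_of_tikhonov_ineq {c δ n a B M r s d e : ℝ} (hc : 0 < c) (hδ : 0 < δ)
    (hδ1 : δ ≤ 1) (hδM : δ ≤ M) (hn : 0 ≤ n) (hs : 0 ≤ s) (he : 0 ≤ e) (hsM : s ≤ a * M)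
    (heM : e ≤ B * M)
    (hineq : r ^ 2 + c * δ * d ^ 2 ≤ s ^ 2 + c * δ * e ^ 2 + 2 * (c * δ) * n * (s + r)) :
    r ≤ (a + 2 * c * n + √c * B) * M :=
  calc r ≤ s + 2 * (c * δ) * n + √(c * δ) * e :=
        le_add_of_sq_le_sq_add (by positivity) hn hs he
          (by nlinarith [mul_nonneg (mul_nonneg hc.le hδ.le) (sq_nonneg d)])
    _ ≤ a * M + 2 * c * n * M + √c * (B * M) := by
        have hsqrt : √(c * δ) ≤ √c := Real.sqrt_le_sqrt (mul_le_of_le_one_right hc.le hδ1)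
        have hαn : 2 * (c * δ) * n ≤ 2 * c * n * M := by
          nlinarith [mul_nonneg (mul_nonneg hc.le hn) (sub_nonneg.2 hδM)]
        have hBM : 0 ≤ B * M := he.trans heM
        gcongr
    _ = (a + 2 * c * n + √c * B) * M := by ring

theorem error_le_of_tikhonov_ineq {c δ n a B K M r s d e : ℝ} (hc : 0 < c) (hδ : 0 < δ)
    (hδ1 : δ ≤ 1) (hδM : δ ≤ M) (hn : 0 ≤ n) (hr : 0 ≤ r) (hs : 0 ≤ s) (he : 0 ≤ e)
    (hsM : s ≤ a * M) (heM : e ≤ B * M) (hrM : r ≤ K * M)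
    (hineq : r ^ 2 + c * δ * d ^ 2 ≤ s ^ 2 + c * δ * e ^ 2 + 2 * (c * δ) * n * (s + r)) :
    d ≤ √((a ^ 2 + c * B ^ 2 + 2 * c * n * (a + K)) / c) * (M / √δ) := by
  have hM : 0 < M := hδ.trans_le hδM
  have ha : 0 ≤ a := nonneg_of_mul_nonneg_left (hs.trans hsM) hM
  have hK : 0 ≤ K := nonneg_of_mul_nonneg_left (hr.trans hrM) hM
  have hs2 : s ^ 2 ≤ a ^ 2 * M ^ 2 := by rw [← mul_pow]; gcongr
  have he2 : c * δ * e ^ 2 ≤ c * B ^ 2 * M ^ 2 :=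
    calc c * δ * e ^ 2 ≤ c * (B * M) ^ 2 := by gcongr; exact mul_le_of_le_one_right hc.le hδ1
      _ = c * B ^ 2 * M ^ 2 := by ring
  have hsr : 2 * (c * δ) * n * (s + r) ≤ 2 * c * n * (a + K) * M ^ 2 := by
    have : δ * (s + r) ≤ M * ((a + K) * M) := mul_le_mul hδM (by linarith) (by positivity) hM.le
    nlinarith [mul_le_mul_of_nonneg_left this (by positivity : 0 ≤ 2 * c * n)]
  refine (abs_le_of_sq_le_sq' ?_ (by positivity)).2
  rw [mul_pow, div_pow, Real.sq_sqrt hδ.le, Real.sq_sqrt (by positivity), mul_div_assoc',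
    le_div_iff₀ hδ, div_mul_eq_mul_div, le_div_iff₀ hc]
  nlinarith

theorem exists_tikhonov_rate_const {c n a B : ℝ} (hc : 0 < c) (hn : 0 ≤ n) (ha : 0 ≤ a)
    (hB : 0 ≤ B) :
    ∃ K > 0, ∀ δ φ r s d e : ℝ, 0 < δ → δ ≤ 1 → 0 ≤ r → 0 ≤ s → 0 ≤ e →
      e ≤ B * φ → s ≤ a * e + δ →
      r ^ 2 + c * δ * d ^ 2 ≤ s ^ 2 + c * δ * e ^ 2 + 2 * (c * δ) * n * (s + r) →
      r ≤ K * max δ φ ∧ d ≤ K * (max δ φ / √δ) := by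
  set K₁ := a * B + 1 + 2 * c * n + √c * B
  set K₂ := √(((a * B + 1) ^ 2 + c * B ^ 2 + 2 * c * n * (a * B + 1 + K₁)) / c)
  refine ⟨K₁ + K₂, by positivity, fun δ φ r s d e hδ hδ1 hr hs he heφ hse hineq => ?_⟩
  have hδM : δ ≤ max δ φ := le_max_left δ φ
  have hM : 0 ≤ max δ φ := hδ.le.trans hδM
  have heM : e ≤ B * max δ φ := heφ.trans (mul_le_mul_of_nonneg_left (le_max_right δ φ) hB)
  have hsM : s ≤ (a * B + 1) * max δ φ :=
    calc s ≤ a * (B * max δ φ) + max δ φ := hse.trans (by gcongr)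
      _ = (a * B + 1) * max δ φ := by ring
  have hrM : r ≤ K₁ * max δ φ := residual_le_of_tikhonov_ineq hc hδ hδ1 hδM hn hs he hsM heM hineq
  have hdM : d ≤ K₂ * (max δ φ / √δ) :=
    error_le_of_tikhonov_ineq hc hδ hδ1 hδM hn hr hs he hsM heM hrM hineq
  exact ⟨hrM.trans (by gcongr; exact le_add_of_nonneg_right (Real.sqrt_nonneg _)),
    hdM.trans (by gcongr; exact le_add_of_nonneg_left (by positivity))⟩

theorem tikhonov_compact_sets_rates_linear_general
    {X Y : Type*} [NormedAddCommGroup X] [InnerProductSpace ℝ X] [CompleteSpace X]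
    [NormedAddCommGroup Y] [InnerProductSpace ℝ Y] [CompleteSpace Y]
    (A : X →L[ℝ] Y) (D C : Set X) (y : Y)
    (xdag : X) (hdagsol : A xdag = y)
    (w : Y) (hw : (ContinuousLinearMap.adjoint A) w = xdag)
    (Xm : ℕ → Set X)
    (mft : ℝ → ℕ)
    (xapx : ℝ → X) (hapx : ∀ δ > (0:ℝ), xapx δ ∈ Xm (mft δ))
    (f : ℕ → ℝ) (hfpos : ∀ n, 0 ≤ f n)
    (Cf : ℝ) (hCf : ∀ δ > (0:ℝ), ‖xapx δ - xdag‖ ^ 2 ≤ Cf * f (mft δ))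
    (c : ℝ) (hc : 0 < c)
    (ydat : ℝ → Y) (hy : ∀ δ > (0:ℝ), ‖ydat δ - y‖ ≤ δ)
    (xsol : ℝ → X)
    (hsol : ∀ δ > (0:ℝ), xsol δ ∈ Xm (mft δ) ∧ ∀ z ∈ Xm (mft δ),
      ‖A (xsol δ) - ydat δ‖ ^ 2 + (c * δ) * ‖xsol δ‖ ^ 2 ≤
        ‖A z - ydat δ‖ ^ 2 + (c * δ) * ‖z‖ ^ 2) :
    (∀ x' : X, x' ∈ C ∩ D → A x' = y → (∀ z ∈ C ∩ D, A z = y → ‖x'‖ ≤ ‖z‖) →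
        x' ∈ Set.range (ContinuousLinearMap.adjoint A) → x' = xdag) ∧
      ∃ C1 > (0:ℝ), ∃ δ0 > (0:ℝ), ∀ δ : ℝ, 0 < δ → δ < δ0 →
        ‖A (xsol δ) - ydat δ‖ ≤ C1 * max δ ((f (mft δ)) ^ ((1:ℝ)/2)) ∧
        ‖xsol δ - xdag‖ ≤ C1 * max (δ ^ ((1:ℝ)/2)) ((f (mft δ)) ^ ((1:ℝ)/2) / δ ^ ((1:ℝ)/2)) := by
  refine ⟨fun x' _ hx' _ hx'range =>
    eq_of_apply_eq_of_mem_range_adjoint (hx'.trans hdagsol.symm) hx'range ⟨w, hw⟩, ?_⟩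
  obtain ⟨K, hK, hrate⟩ := exists_tikhonov_rate_const hc (norm_nonneg w) (norm_nonneg A)
    (Real.sqrt_nonneg (max Cf 0))
  refine ⟨K, hK, 1, one_pos, fun δ hδ hδ1 => ?_⟩
  have happrox : ‖xapx δ - xdag‖ ≤ √(max Cf 0) * √(f (mft δ)) := by
    rw [← Real.sqrt_mul (le_max_right Cf 0), Real.le_sqrt (norm_nonneg _)
      (mul_nonneg (le_max_right Cf 0) (hfpos _))]
    exact (hCf δ hδ).trans (by gcongr; exacts [hfpos _, le_max_left Cf 0])
  have hdata : ‖A (xapx δ) - ydat δ‖ ≤ ‖A‖ * ‖xapx δ - xdag‖ + δ := by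
    refine (norm_apply_sub_le_opNorm_mul_add A _ xdag _).trans ?_
    rw [hdagsol, norm_sub_rev y]
    exact add_le_add_right (hy δ hδ) _
  have hineq := tikhonov_source_ineq (by positivity) hw ((hsol δ hδ).2 _ (hapx δ hδ))
  have hmax : max √δ (√(f (mft δ)) / √δ) = max δ √(f (mft δ)) / √δ := by
    rw [← max_div_div_right (Real.sqrt_nonneg δ), Real.div_sqrt]
  simp only [← Real.sqrt_eq_rpow, hmax]
  exact hrate δ _ _ _ _ _ hδ hδ1.le (norm_nonneg _) (norm_nonneg _) (norm_nonneg _) happrox hdata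
    hineq

/-- Convergence rates in the linear case under the source condition `x† ∈ R(A*)`
(with `x* = 0`), together with uniqueness of the minimum norm solution in `R(A*)`. -/
theorem tikhonov_compact_sets_rates_linear
    {X Y : Type*} [NormedAddCommGroup X] [InnerProductSpace ℝ X] [CompleteSpace X]
    [NormedAddCommGroup Y] [InnerProductSpace ℝ Y] [CompleteSpace Y]
    (A : X →L[ℝ] Y) (D C : Set X) (y : Y)
    (hD : WeaklySeqClosed D) (hC : WeaklySeqClosed C)
    (hex : ∃ x ∈ C ∩ D, A x = y)
    (xdag : X) (hdagmem : xdag ∈ C ∩ D) (hdagsol : A xdag = y)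
    (hdagmin : ∀ z ∈ C ∩ D, A z = y → ‖xdag‖ ≤ ‖z‖)
    (w : Y) (hw : (ContinuousLinearMap.adjoint A) w = xdag)
    (Xm : ℕ → Set X) (hXc : ∀ m, IsCompact (Xm m)) (hXsub : ∀ m, Xm m ⊆ C ∩ D)
    (mft : ℝ → ℕ) (hm : Tendsto mft (nhdsWithin 0 (Set.Ioi 0)) atTop)
    (xapx : ℝ → X) (hapx : ∀ δ > (0:ℝ), xapx δ ∈ Xm (mft δ))
    (hapx0 : Tendsto (fun δ => ‖xapx δ - xdag‖ ^ 2 / δ) (nhdsWithin 0 (Set.Ioi 0)) (nhds 0))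
    (f : ℕ → ℝ) (hfpos : ∀ n, 0 ≤ f n)
    (Cf : ℝ) (hCf : ∀ δ > (0:ℝ), ‖xapx δ - xdag‖ ^ 2 ≤ Cf * f (mft δ))
    (c : ℝ) (hc : 0 < c)
    (ydat : ℝ → Y) (hy : ∀ δ > (0:ℝ), ‖ydat δ - y‖ ≤ δ)
    (xsol : ℝ → X)
    (hsol : ∀ δ > (0:ℝ), xsol δ ∈ Xm (mft δ) ∧ ∀ z ∈ Xm (mft δ),
      ‖A (xsol δ) - ydat δ‖ ^ 2 + (c * δ) * ‖xsol δ‖ ^ 2 ≤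
        ‖A z - ydat δ‖ ^ 2 + (c * δ) * ‖z‖ ^ 2) :
    (∀ x' : X, x' ∈ C ∩ D → A x' = y → (∀ z ∈ C ∩ D, A z = y → ‖x'‖ ≤ ‖z‖) →
        x' ∈ Set.range (ContinuousLinearMap.adjoint A) → x' = xdag) ∧
      ∃ C1 > (0:ℝ), ∃ δ0 > (0:ℝ), ∀ δ : ℝ, 0 < δ → δ < δ0 →
        ‖A (xsol δ) - ydat δ‖ ≤ C1 * max δ ((f (mft δ)) ^ ((1:ℝ)/2)) ∧
        ‖xsol δ - xdag‖ ≤ C1 * max (δ ^ ((1:ℝ)/2)) ((f (mft δ)) ^ ((1:ℝ)/2) / δ ^ ((1:ℝ)/2)) :=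
  tikhonov_compact_sets_rates_linear_general A D C y xdag hdagsol w hw Xm mft xapx hapx f hfpos Cf
    hCf c hc ydat hy xsol hsol
end

section
/- In the linear case, for x_{m,α}^δ minimizing ‖Az − y^δ‖² + α‖z‖² over X_m, with x† = A*w and x_m ∈ X_m, the following explicit bound holds: (‖Ax_{m,α}^δ − y^δ‖ − α‖w‖)² + α‖x_{m,α}^δ − x†‖² ≤ (δ + α‖w‖)² + ‖A‖²‖ξ_m‖² + 2δ‖A‖‖ξ_m‖ + α‖ξ_m‖² + 2α‖ξ_m‖‖x†‖, where ξ_m = x_m − x†. -/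
/-!
Write `e = x - x†` and `ξ = xm - x†`. Expanding `‖x‖²` and `‖xm‖²` around `x†` turns the
minimality of `x` against the competitor `xm` into
`‖A x - yδ‖² + α‖e‖² ≤ ‖A xm - yδ‖² + α‖ξ‖² + 2α⟪ξ, x†⟫ - 2α⟪e, x†⟫`.
The source condition `x† = A* w` moves the last inner product to the data side,
`⟪e, x†⟫ = ⟪A x - yδ, w⟫ + ⟪yδ - A x†, w⟫ ≥ -(‖A x - yδ‖ + δ)‖w‖`, and completing the square in
`‖A x - yδ‖` gives the bound.
-/

open scoped RealInnerProductSpace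

section

variable {X Y : Type*} [NormedAddCommGroup X] [InnerProductSpace ℝ X]
  [NormedAddCommGroup Y] [InnerProductSpace ℝ Y]

theorem norm_sq_eq_norm_sub_sq_add (u a : X) :
    ‖u‖ ^ 2 = ‖u - a‖ ^ 2 + 2 * ⟪u - a, a⟫ + ‖a‖ ^ 2 := by
  rw [← norm_add_sq_real, sub_add_cancel]

theorem norm_apply_sub_le_of_norm_sub_le (A : X →L[ℝ] Y) {u a : X} {yδ : Y} {δ : ℝ}
    (hnoise : ‖yδ - A a‖ ≤ δ) : ‖A u - yδ‖ ≤ ‖A‖ * ‖u - a‖ + δ :=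
  calc ‖A u - yδ‖ = ‖A (u - a) - (yδ - A a)‖ := by rw [map_sub, sub_sub_sub_cancel_right]
    _ ≤ ‖A (u - a)‖ + ‖yδ - A a‖ := norm_sub_le _ _
    _ ≤ ‖A‖ * ‖u - a‖ + δ := add_le_add (A.le_opNorm _) hnoise

theorem neg_mul_le_inner_sub_of_adjoint_eq [CompleteSpace X] [CompleteSpace Y]
    (A : X →L[ℝ] Y) {xdag u : X} {w yδ : Y} {δ : ℝ}
    (hw : ContinuousLinearMap.adjoint A w = xdag) (hnoise : ‖yδ - A xdag‖ ≤ δ) :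
    -((‖A u - yδ‖ + δ) * ‖w‖) ≤ ⟪u - xdag, xdag⟫ := by
  have hsplit : ⟪u - xdag, xdag⟫ = ⟪A u - yδ, w⟫ + ⟪yδ - A xdag, w⟫ := by
    rw [← hw, ContinuousLinearMap.adjoint_inner_right, ← inner_add_left, map_sub,
      sub_add_sub_cancel]
  have hres := neg_le_of_abs_le (abs_real_inner_le_norm (A u - yδ) w)
  have hdata := neg_le_of_abs_le (abs_real_inner_le_norm (yδ - A xdag) w)
  have hδ := mul_le_mul_of_nonneg_right hnoise (norm_nonneg w)
  linarith

end

theorem tikhonov_linear_explicit_bound_general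
    {X Y : Type*} [NormedAddCommGroup X] [InnerProductSpace ℝ X] [CompleteSpace X]
    [NormedAddCommGroup Y] [InnerProductSpace ℝ Y] [CompleteSpace Y]
    (A : X →L[ℝ] Y) (xdag : X) (w : Y)
    (hw : (ContinuousLinearMap.adjoint A) w = xdag)
    (yδ : Y) (δ : ℝ) (hnoise : ‖yδ - A xdag‖ ≤ δ)
    (α : ℝ) (hα : 0 < α)
    (Xm : Set X) (xm : X) (hxm : xm ∈ Xm)
    (x : X)
    (hxmin : ∀ z ∈ Xm, ‖A x - yδ‖ ^ 2 + α * ‖x‖ ^ 2 ≤ ‖A z - yδ‖ ^ 2 + α * ‖z‖ ^ 2) :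
    (‖A x - yδ‖ - α * ‖w‖) ^ 2 + α * ‖x - xdag‖ ^ 2 ≤
      (δ + α * ‖w‖) ^ 2 + ‖A‖ ^ 2 * ‖xm - xdag‖ ^ 2 + 2 * δ * ‖A‖ * ‖xm - xdag‖ +
        α * ‖xm - xdag‖ ^ 2 + 2 * α * ‖xm - xdag‖ * ‖xdag‖ := by
  have hmin := hxmin xm hxm
  rw [norm_sq_eq_norm_sub_sq_add x xdag, norm_sq_eq_norm_sub_sq_add xm xdag] at hmin
  have hres : ‖A xm - yδ‖ ^ 2 ≤ (‖A‖ * ‖xm - xdag‖ + δ) ^ 2 :=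
    pow_le_pow_left₀ (norm_nonneg _) (norm_apply_sub_le_of_norm_sub_le A hnoise) 2
  have hsource := mul_le_mul_of_nonneg_left
    (neg_mul_le_inner_sub_of_adjoint_eq A (u := x) hw hnoise) hα.le
  have hcompetitor := mul_le_mul_of_nonneg_left (real_inner_le_norm (xm - xdag) xdag) hα.le
  linarith

/-- Explicit bound in the linear case: for a Tikhonov minimizer `x` over `Xm`,
any `xm ∈ Xm`, source element `w` with `A* w = x†`, exact data `y = A x†` and noisy data
`yδ` with `‖yδ − y‖ ≤ δ`, one has
`(‖A x − yδ‖ − α‖w‖)² + α‖x − x†‖² ≤ (δ + α‖w‖)² + ‖A‖²‖ξ‖² + 2δ‖A‖‖ξ‖ + α‖ξ‖² + 2α‖ξ‖‖x†‖`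
where `ξ = xm − x†`. -/
theorem tikhonov_linear_explicit_bound
    {X Y : Type*} [NormedAddCommGroup X] [InnerProductSpace ℝ X] [CompleteSpace X]
    [NormedAddCommGroup Y] [InnerProductSpace ℝ Y] [CompleteSpace Y]
    (A : X →L[ℝ] Y) (xdag : X) (w : Y)
    (hw : (ContinuousLinearMap.adjoint A) w = xdag)
    (yδ : Y) (δ : ℝ) (hδ : 0 ≤ δ) (hnoise : ‖yδ - A xdag‖ ≤ δ)
    (α : ℝ) (hα : 0 < α)
    (Xm : Set X) (xm : X) (hxm : xm ∈ Xm)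
    (x : X) (hxmem : x ∈ Xm)
    (hxmin : ∀ z ∈ Xm, ‖A x - yδ‖ ^ 2 + α * ‖x‖ ^ 2 ≤ ‖A z - yδ‖ ^ 2 + α * ‖z‖ ^ 2) :
    (‖A x - yδ‖ - α * ‖w‖) ^ 2 + α * ‖x - xdag‖ ^ 2 ≤
      (δ + α * ‖w‖) ^ 2 + ‖A‖ ^ 2 * ‖xm - xdag‖ ^ 2 + 2 * δ * ‖A‖ * ‖xm - xdag‖ +
        α * ‖xm - xdag‖ ^ 2 + 2 * α * ‖xm - xdag‖ * ‖xdag‖ :=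
  tikhonov_linear_explicit_bound_general A xdag w hw yδ δ hnoise α hα Xm xm hxm x hxmin
end
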